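/- arXiv:math/0204172 — 5 statements merged into one kernel-verified Lean document; each statement's English description precedes it below -/
import Mathlib

section
/- Let d ≥ 2 and let m be a lower-triangular family of integers m_{i,j} (1 ≤ j ≤ i ≤ d-1). For ε = (ε_1,…,ε_{d-1}) ∈ {0,1}^{d-1} define recursively v_k(ε) := ε_{k-1}·(m_{k-1,1} + Σ_{l=2}^{k-1} m_{k-1,l}·v_l(ε)) for k = 2,…,d. For n ∈ {2,…,d} and k ∈ {0,…,n-2} set q_{k,n}(ε) := Σ over chains 0 = i_0 < i_1 < ⋯ < i_k < i_{k+1} = n-1 of ∏_{j=1}^{k+1} ε_{i_j}·m_{i_j, i_{j-1}+1}. Then for every n ∈ {2,…,d}, v_n(ε) = Σ_{k=0}^{n-2} q_{k,n}(ε). -/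
/-- Sum over chains `0 = i₀ < i₁ < ⋯ < i_k < i_{k+1} = n-1` of
`∏_{j=1}^{k+1} ε_{i_j} · m_{i_j, i_{j-1}+1}`. -/
def qSum (m : ℕ → ℕ → ℤ) (ε : ℕ → ℤ) (k n : ℕ) : ℤ :=
  ∑ c ∈ Finset.univ.filter
      (fun c : Fin (k + 2) → Fin n =>
        StrictMono c ∧ (c 0 : ℕ) = 0 ∧ (c (Fin.last (k + 1)) : ℕ) = n - 1),
    ∏ j : Fin (k + 1),
      ε (c j.succ : ℕ) * m (c j.succ : ℕ) ((c j.castSucc : ℕ) + 1)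

/-!
Splitting off the last step `i_k → n - 1` of a chain and writing `i_k = l - 1` exhibits a chain
of length `k + 1` to `n - 1` as a chain of length `k` to `l - 1` followed by that step, whence
`q_{k+1,n} = ε_{n-1} ∑_{2 ≤ l < n} m_{n-1,l} q_{k,l}`. Together with `q_{0,n} = ε_{n-1} m_{n-1,1}`
and `q_{k,l} = 0` for `k ≥ l - 1`, this is the recursion defining `v`, so strong induction on `n`
concludes.
-/

open Finset

namespace qSum

/-- The chains of `qSum`, with values in `ℕ` rather than `Fin n`, so that chains ending at
different points live in the same type. -/
def chains (k n : ℕ) : Finset (Fin (k + 2) → ℕ) :=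
  (univ.filter fun c : Fin (k + 2) → Fin n =>
      StrictMono c ∧ (c 0 : ℕ) = 0 ∧ (c (Fin.last (k + 1)) : ℕ) = n - 1).map
    ⟨fun c j => c j, fun _ _ h => funext fun j => Fin.ext (congrFun h j)⟩

theorem mem_chains {k n : ℕ} {c : Fin (k + 2) → ℕ} :
    c ∈ chains k n ↔ StrictMono c ∧ c 0 = 0 ∧ c (Fin.last (k + 1)) = n - 1 := by
  simp only [chains, mem_map, mem_filter, mem_univ, true_and]
  constructor
  · rintro ⟨c, ⟨hc, h0, hlast⟩, rfl⟩
    exact ⟨Fin.val_strictMono.comp hc, h0, hlast⟩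
  · rintro ⟨hc, h0, hlast⟩
    have hlt : ∀ j, c j < n := fun j => by
      have := hc.monotone (Fin.le_last j)
      have := hc (show (0 : Fin (k + 2)) < Fin.last (k + 1) from Fin.last_pos)
      omega
    exact ⟨fun j => ⟨c j, hlt j⟩, ⟨fun _ _ h => hc h, h0, hlast⟩, rfl⟩

theorem chains_zero {n : ℕ} (hn : 2 ≤ n) : chains 0 n = {![0, n - 1]} := by
  ext c
  rw [mem_chains, mem_singleton]
  constructor
  · rintro ⟨-, h0, hlast⟩
    ext j
    fin_cases j
    exacts [h0, hlast]
  · rintro rfl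
    refine ⟨Fin.strictMono_iff_lt_succ.2 fun i => ?_, rfl, rfl⟩
    fin_cases i
    show 0 < n - 1
    omega

theorem sum_chains_succ {M : Type*} [AddCommMonoid M] (k n : ℕ) (f : (Fin (k + 3) → ℕ) → M) :
    ∑ c ∈ chains (k + 1) n, f c =
      ∑ l ∈ Ico 2 n, ∑ c ∈ chains k l, f (Fin.snoc c (n - 1)) := by
  rw [sum_sigma']
  symm
  refine sum_nbij' (fun p => Fin.snoc p.2 (n - 1))
    (fun c => ⟨c (Fin.last (k + 1)).castSucc + 1, Fin.init c⟩) ?_ ?_ ?_ ?_ (fun _ _ => rfl)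
  · rintro ⟨l, c⟩ h
    simp only [mem_sigma, mem_Ico, mem_chains] at h ⊢
    obtain ⟨⟨hl2, hln⟩, hc, h0, hlast⟩ := h
    refine ⟨?_, by rw [← Fin.castSucc_zero, Fin.snoc_castSucc, h0], by simp⟩
    rw [← Fin.insertNth_last']
    exact Fin.strictMono_insertNth_last hc _ (by omega)
  · intro c h
    simp only [mem_sigma, mem_Ico, mem_chains] at h ⊢
    obtain ⟨hc, h0, hlast⟩ := h
    have h1 := hc (Fin.castSucc_pos (Fin.last_pos) : (0 : Fin (k + 3)) < (Fin.last (k + 1)).castSucc)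
    have h2 := hc (Fin.castSucc_lt_last (Fin.last (k + 1)))
    exact ⟨⟨by omega, by omega⟩, hc.comp Fin.strictMono_castSucc, h0, by simp [Fin.init]⟩
  · rintro ⟨l, c⟩ h
    simp only [mem_sigma, mem_Ico, mem_chains] at h
    simp only [Fin.snoc_castSucc, Fin.init_snoc, h.2.2.2]
    congr
    omega
  · intro c h
    rw [← (mem_chains.1 h).2.2, Fin.snoc_init_self]

def chainWeight (m : ℕ → ℕ → ℤ) (ε : ℕ → ℤ) {k : ℕ} (c : Fin (k + 1) → ℕ) : ℤ :=
  ∏ j : Fin k, ε (c j.succ) * m (c j.succ) (c j.castSucc + 1)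

theorem chainWeight_snoc (m : ℕ → ℕ → ℤ) (ε : ℕ → ℤ) {k : ℕ} (c : Fin (k + 1) → ℕ) (x : ℕ) :
    chainWeight m ε (Fin.snoc c x : Fin (k + 2) → ℕ) =
      chainWeight m ε c * (ε x * m x (c (Fin.last k) + 1)) := by
  simp only [chainWeight, Fin.prod_univ_castSucc, Fin.succ_castSucc, Fin.snoc_castSucc,
    Fin.succ_last, Fin.snoc_last]

end qSum

open qSum

section

variable (m : ℕ → ℕ → ℤ) (ε : ℕ → ℤ)

theorem qSum_eq_sum_chainWeight (k n : ℕ) :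
    qSum m ε k n = ∑ c ∈ chains k n, chainWeight m ε c := by
  rw [chains, sum_map]
  rfl

theorem qSum_zero_left {n : ℕ} (hn : 2 ≤ n) : qSum m ε 0 n = ε (n - 1) * m (n - 1) 1 := by
  simp [qSum_eq_sum_chainWeight, chains_zero hn, chainWeight]

theorem qSum_succ_left (k n : ℕ) :
    qSum m ε (k + 1) n = ε (n - 1) * ∑ l ∈ Ico 2 n, m (n - 1) l * qSum m ε k l := by
  rw [qSum_eq_sum_chainWeight, sum_chains_succ, mul_sum]
  refine sum_congr rfl fun l hl => ?_
  rw [qSum_eq_sum_chainWeight, mul_sum, mul_sum]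
  refine sum_congr rfl fun c hc => ?_
  rw [chainWeight_snoc, (mem_chains.1 hc).2.2, Nat.sub_add_cancel (by grind)]
  ring

theorem qSum_eq_zero_of_lt {k n : ℕ} (h : n < k + 2) : qSum m ε k n = 0 :=
  sum_eq_zero fun c hc => absurd (Fintype.card_le_of_injective c (mem_filter.1 hc).2.1.injective)
    (by simpa using h)

end

theorem stmt0_general (m : ℕ → ℕ → ℤ) (ε : ℕ → ℤ) (v : ℕ → ℤ)
    (hv : ∀ k, 2 ≤ k →
      v k = ε (k - 1) * (m (k - 1) 1 + ∑ l ∈ Finset.Ico 2 k, m (k - 1) l * v l))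
    (n : ℕ) (hn2 : 2 ≤ n) :
    v n = ∑ k ∈ Finset.range (n - 1), qSum m ε k n := by
  induction n using Nat.strong_induction_on with
  | _ n ih =>
  have hv_lt : ∀ l ∈ Ico 2 n, v l = ∑ k ∈ range (n - 2), qSum m ε k l := by
    intro l hl
    rw [mem_Ico] at hl
    rw [ih l hl.2 hl.1]
    exact sum_subset (range_subset_range.2 (by omega)) fun k _ hk =>
      qSum_eq_zero_of_lt m ε (by simp at hk; omega)
  have hrange : range (n - 1) = range (n - 2 + 1) := by congr 1; omega
  rw [hv n hn2, hrange, sum_range_succ', qSum_zero_left m ε hn2]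
  simp only [qSum_succ_left, ← mul_sum]
  rw [sum_congr rfl fun l hl => by rw [hv_lt l hl, mul_sum], sum_comm]
  ring

theorem stmt0 (d : ℕ) (hd : 2 ≤ d) (m : ℕ → ℕ → ℤ) (ε : ℕ → ℤ)
    (hε : ∀ i, ε i = 0 ∨ ε i = 1) (v : ℕ → ℤ)
    (hv : ∀ k, 2 ≤ k →
      v k = ε (k - 1) * (m (k - 1) 1 + ∑ l ∈ Finset.Ico 2 k, m (k - 1) l * v l))
    (n : ℕ) (hn2 : 2 ≤ n) (hnd : n ≤ d) :
    v n = ∑ k ∈ Finset.range (n - 1), qSum m ε k n :=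
  stmt0_general m ε v hv n hn2
end

section
/- Let d ≥ 3. Any integer matrix B of size (2d-1) × (d-1) of the following form is a dominating matrix: the top (d) × (d-1) block is upper-triangular-type with entries α_{j,i} ≥ 0 for i ≤ j, with entry -1 in position (j+1, j) for each column j (i.e., B_{j+1,j} = -1), and zeros below; the bottom (d-1) × (d-1) block has entries β_{j,i} ≥ 0 off the diagonal positions described, entry -1 in position (d+j, j) for each column j, with zeros below; and each column contains at least one positive entry. Here a matrix is called mixed if every column has both a positive and a negative entry, and a mixed matrix is dominating if it contains no mixed square submatrix (of any size ρ ≥ 1). -/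
/-- A matrix is *mixed* if every column has both a positive and a negative entry. -/
def IsMixedMat {ν κ : ℕ} (A : Fin ν → Fin κ → ℤ) : Prop :=
  ∀ c, (∃ r, 0 < A r c) ∧ (∃ r, A r c < 0)

/-- The matrix contains a mixed `ρ × ρ` square submatrix for some `ρ ≥ 1`. -/
def HasMixedSquareSubmatrix {ν κ : ℕ} (A : Fin ν → Fin κ → ℤ) : Prop :=
  ∃ ρ : ℕ, 1 ≤ ρ ∧ ∃ (f : Fin ρ → Fin ν) (g : Fin ρ → Fin κ),
    Function.Injective f ∧ Function.Injective g ∧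
      IsMixedMat (fun i j => A (f i) (g j))

/-- A mixed matrix is *dominating* if it contains no mixed square submatrix. -/
def IsDominating {ν κ : ℕ} (A : Fin ν → Fin κ → ℤ) : Prop :=
  IsMixedMat A ∧ ¬ HasMixedSquareSubmatrix A

/-!
Give every row `i` a level (`i` in the top block, `i - d + 1` in the bottom one) and column `j`
the level `j + 1`. Both `-1` entries of a column lie exactly at the column's level and its
positive entries lie strictly below it. In a mixed square submatrix, choosing a negative entry
in each column gives an injective, hence bijective, map from columns to rows preserving levels;
the positive entry of the column of least level then sits in a row whose level is at least that
column's level, which is impossible.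
-/

open Function

theorem not_isMixedMat_of_levels {α : Type*} [LinearOrder α] {ρ : ℕ} (hρ : 0 < ρ)
    (A : Fin ρ → Fin ρ → ℤ) (row col : Fin ρ → α) (hcol : Injective col)
    (hneg : ∀ r c, A r c < 0 → row r = col c) (hpos : ∀ r c, 0 < A r c → row r < col c) :
    ¬ IsMixedMat A := by
  intro hmix
  choose negRow hnegRow using fun c => (hmix c).2
  have hinj : Injective negRow := fun a b hab =>
    hcol <| by rw [← hneg _ a (hnegRow a), ← hneg _ b (hnegRow b), hab]
  obtain ⟨c₀, -, hc₀⟩ := Finset.exists_min_image Finset.univ col ⟨⟨0, hρ⟩, Finset.mem_univ _⟩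
  obtain ⟨p, hp⟩ := (hmix c₀).1
  obtain ⟨c, rfl⟩ := (Finite.injective_iff_surjective.mp hinj) p
  have hlevel : row (negRow c) = col c := hneg _ c (hnegRow c)
  exact (hpos _ c₀ hp).not_ge (hlevel ▸ hc₀ c (Finset.mem_univ _))

theorem not_hasMixedSquareSubmatrix_of_levels {α : Type*} [LinearOrder α] {ν κ : ℕ}
    (A : Fin ν → Fin κ → ℤ) (row : Fin ν → α) (col : Fin κ → α) (hcol : Injective col)
    (hneg : ∀ r c, A r c < 0 → row r = col c) (hpos : ∀ r c, 0 < A r c → row r < col c) :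
    ¬ HasMixedSquareSubmatrix A := by
  rintro ⟨ρ, hρ, f, g, -, hg, hmix⟩
  exact not_isMixedMat_of_levels hρ _ (row ∘ f) (col ∘ g) (hcol.comp hg)
    (fun _ _ => hneg _ _) (fun _ _ => hpos _ _) hmix

def rowLevel (d i : ℕ) : ℕ := if i < d then i else i - d + 1

theorem stmt2_general (d : ℕ) (B : Fin (2 * d - 1) → Fin (d - 1) → ℤ)
    (hneg1 : ∀ (i : Fin (2 * d - 1)) (j : Fin (d - 1)), (i : ℕ) = (j : ℕ) + 1 → B i j = -1)
    (hneg2 : ∀ (i : Fin (2 * d - 1)) (j : Fin (d - 1)), (i : ℕ) = d + (j : ℕ) → B i j = -1)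
    (htopzero : ∀ (i : Fin (2 * d - 1)) (j : Fin (d - 1)),
      (j : ℕ) + 1 < (i : ℕ) → (i : ℕ) < d → B i j = 0)
    (hbotzero : ∀ (i : Fin (2 * d - 1)) (j : Fin (d - 1)),
      d + (j : ℕ) < (i : ℕ) → B i j = 0)
    (htopnn : ∀ (i : Fin (2 * d - 1)) (j : Fin (d - 1)), (i : ℕ) ≤ (j : ℕ) → 0 ≤ B i j)
    (hbotnn : ∀ (i : Fin (2 * d - 1)) (j : Fin (d - 1)),
      d ≤ (i : ℕ) → (i : ℕ) < d + (j : ℕ) → 0 ≤ B i j)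
    (hpos : ∀ j, ∃ i, 0 < B i j) :
    IsDominating B := by
  have hnegLevel : ∀ i j, B i j < 0 → rowLevel d i = j + 1 := by
    intro i j h
    have := htopnn i j; have := htopzero i j; have := hbotnn i j; have := hbotzero i j
    unfold rowLevel; split_ifs <;> omega
  have hposLevel : ∀ i j, 0 < B i j → rowLevel d i < j + 1 := by
    intro i j h
    have := hneg1 i j; have := hneg2 i j; have := htopzero i j; have := hbotzero i j
    unfold rowLevel; split_ifs <;> omega
  refine ⟨fun j => ⟨hpos j, ⟨j.val + 1, by omega⟩, by simp [hneg1]⟩, ?_⟩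
  exact not_hasMixedSquareSubmatrix_of_levels B (fun i => rowLevel d i) (fun j => (j : ℕ) + 1)
    (fun a b h => Fin.ext (by simpa using h)) hnegLevel hposLevel

theorem stmt2 (d : ℕ) (hd : 3 ≤ d) (B : Fin (2 * d - 1) → Fin (d - 1) → ℤ)
    (hneg1 : ∀ (i : Fin (2 * d - 1)) (j : Fin (d - 1)), (i : ℕ) = (j : ℕ) + 1 → B i j = -1)
    (hneg2 : ∀ (i : Fin (2 * d - 1)) (j : Fin (d - 1)), (i : ℕ) = d + (j : ℕ) → B i j = -1)
    (htopzero : ∀ (i : Fin (2 * d - 1)) (j : Fin (d - 1)),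
      (j : ℕ) + 1 < (i : ℕ) → (i : ℕ) < d → B i j = 0)
    (hbotzero : ∀ (i : Fin (2 * d - 1)) (j : Fin (d - 1)),
      d + (j : ℕ) < (i : ℕ) → B i j = 0)
    (htopnn : ∀ (i : Fin (2 * d - 1)) (j : Fin (d - 1)), (i : ℕ) ≤ (j : ℕ) → 0 ≤ B i j)
    (hbotnn : ∀ (i : Fin (2 * d - 1)) (j : Fin (d - 1)),
      d ≤ (i : ℕ) → (i : ℕ) < d + (j : ℕ) → 0 ≤ B i j)
    (hpos : ∀ j, ∃ i, 0 < B i j) :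
    IsDominating B :=
  stmt2_general d B hneg1 hneg2 htopzero hbotzero htopnn hbotnn hpos
end

section
/- Let d ≥ 3 and let m_{i,j} (1 ≤ j ≤ i ≤ d-1) be integers such that the Nakajima admissibility conditions hold, i.e., for all ε ∈ {0,1}^{d-1} the recursively defined values v_k(ε) := ε_{k-1}(m_{k-1,1} + Σ_{l=2}^{k-1} m_{k-1,l} v_l(ε)) satisfy v_k(ε) ≥ 0. Define recursively λ_{d-2} := min{0, m_{d-1,d-1}}, λ_i := min{0, m_{d-1,i+1} + Σ_{k=i+1}^{d-2} λ_k m_{k,i+1}} for i ≤ d-3, and μ_0 := m_{d-1,1} + Σ_{i=1}^{d-2} λ_i m_{i,1}. Then μ_0 ≥ 0. -/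
/-!
Switch on exactly the coordinates where `λ` is negative: put `ε_i = 1` iff `λ_i < 0` for
`i ≤ d - 2`, and `ε_{d-1} = 1`. Then `v_d = m_{d-1,1} + ∑_l m_{d-1,l} v_l`, and the
recursion for `λ` behaves like a dual solution satisfying complementary slackness with the
recursion for `v`: whenever `v_{i+1} ≠ 0` the minimum defining `λ_i` is attained by its second
argument, and whenever `λ_i ≠ 0` the coordinate `v_{i+1}` is its full row sum. Exchanging the
order of summation then turns `∑_l m_{d-1,l} v_l` into `∑_i λ_i m_{i,1}`, so `μ_0 = v_d ≥ 0`.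
-/

open Finset

noncomputable def nakajimaCoord (ε : ℕ → ℤ) (m : ℕ → ℕ → ℤ) : ℕ → ℤ
  | k =>
    if 2 ≤ k then
      ε (k - 1) * (m (k - 1) 1 + ∑ l ∈ (Ico 2 k).attach, m (k - 1) l * nakajimaCoord ε m l)
    else 0
  decreasing_by exact (mem_Ico.mp l.2).2

lemma nakajimaCoord_eq (ε : ℕ → ℤ) (m : ℕ → ℕ → ℤ) {k : ℕ} (hk : 2 ≤ k) :
    nakajimaCoord ε m k =
      ε (k - 1) * (m (k - 1) 1 + ∑ l ∈ Ico 2 k, m (k - 1) l * nakajimaCoord ε m l) := by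
  rw [nakajimaCoord, if_pos hk, sum_attach (Ico 2 k) (fun l => m (k - 1) l * nakajimaCoord ε m l)]

lemma sum_Icc_one_comp_succ {M : Type*} [AddCommMonoid M] (d : ℕ) (g : ℕ → M) :
    ∑ i ∈ Icc 1 (d - 2), g (i + 1) = ∑ l ∈ Ico 2 d, g l :=
  sum_nbij' (· + 1) (· - 1) (by simp only [mem_Icc, mem_Ico]; omega)
    (by simp only [mem_Icc, mem_Ico]; omega) (by simp) (by simp only [mem_Ico]; omega) (by simp)

lemma sum_mul_eq_sum_mul_of_slackness (d : ℕ) (a : ℕ → ℤ) (m : ℕ → ℕ → ℤ) (lam v : ℕ → ℤ)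
    (hdual : ∀ i ∈ Icc 1 (d - 2),
      (a (i + 1) + ∑ k ∈ Icc (i + 1) (d - 2), lam k * m k (i + 1)) * v (i + 1) = lam i * v (i + 1))
    (hprimal : ∀ i ∈ Icc 1 (d - 2),
      lam i * v (i + 1) = lam i * (m i 1 + ∑ j ∈ Ico 2 (i + 1), m i j * v j)) :
    ∑ l ∈ Ico 2 d, a l * v l = ∑ i ∈ Icc 1 (d - 2), lam i * m i 1 := by
  have hswap : ∑ l ∈ Ico 2 d, ∑ k ∈ Icc l (d - 2), lam k * m k l * v l =
      ∑ i ∈ Icc 1 (d - 2), ∑ j ∈ Ico 2 (i + 1), lam i * m i j * v j :=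
    sum_comm' fun l k => by simp only [mem_Icc, mem_Ico]; omega
  have hdual_sum : ∑ i ∈ Icc 1 (d - 2), lam i * v (i + 1) =
      ∑ l ∈ Ico 2 d, a l * v l + ∑ l ∈ Ico 2 d, ∑ k ∈ Icc l (d - 2), lam k * m k l * v l := by
    rw [← sum_congr rfl hdual,
      sum_Icc_one_comp_succ d fun l => (a l + ∑ k ∈ Icc l (d - 2), lam k * m k l) * v l,
      ← sum_add_distrib]
    simp only [add_mul, sum_mul]
  have hprimal_sum : ∑ i ∈ Icc 1 (d - 2), lam i * v (i + 1) =
      ∑ i ∈ Icc 1 (d - 2), lam i * m i 1 +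
        ∑ i ∈ Icc 1 (d - 2), ∑ j ∈ Ico 2 (i + 1), lam i * m i j * v j := by
    rw [sum_congr rfl hprimal, ← sum_add_distrib]
    simp only [mul_add, mul_sum, mul_assoc]
  linarith

lemma sum_mul_nakajimaCoord_eq (d : ℕ) (a : ℕ → ℤ) (m : ℕ → ℕ → ℤ) (lam ε : ℕ → ℤ)
    (hlam : ∀ i ∈ Icc 1 (d - 2),
      lam i = min 0 (a (i + 1) + ∑ k ∈ Icc (i + 1) (d - 2), lam k * m k (i + 1)))
    (hε : ∀ i ∈ Icc 1 (d - 2), ε i = if lam i < 0 then 1 else 0) :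
    ∑ l ∈ Ico 2 d, a l * nakajimaCoord ε m l = ∑ i ∈ Icc 1 (d - 2), lam i * m i 1 := by
  have hv (i : ℕ) := nakajimaCoord_eq ε m (k := i + 1)
  refine sum_mul_eq_sum_mul_of_slackness d a m lam _ (fun i hi => ?_) (fun i hi => ?_)
  · rcases le_or_gt (a (i + 1) + ∑ k ∈ Icc (i + 1) (d - 2), lam k * m k (i + 1)) 0 with hc | hc
    · rw [hlam i hi, min_eq_right hc]
    · have hlam0 : lam i = 0 := by rw [hlam i hi, min_eq_left hc.le]
      rw [hv i (by simp at hi; omega), Nat.add_sub_cancel, hε i hi, hlam0]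
      simp
  · rcases (hlam i hi).trans_le (min_le_left _ _) |>.lt_or_eq with hneg | hzero
    · rw [hv i (by simp at hi; omega), Nat.add_sub_cancel, hε i hi, if_pos hneg, one_mul]
    · rw [hzero, zero_mul, zero_mul]

theorem stmt3_general (d : ℕ) (hd : 3 ≤ d) (m : ℕ → ℕ → ℤ)
    -- admissibility: all recursively defined coordinates `v k (ε)` are non-negative
    (hadm : ∀ ε : ℕ → ℤ, (∀ i, ε i = 0 ∨ ε i = 1) →
      ∀ v : ℕ → ℤ,
        (∀ k, 2 ≤ k →
          v k = ε (k - 1) * (m (k - 1) 1 + ∑ l ∈ Finset.Ico 2 k, m (k - 1) l * v l)) →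
      ∀ k, 2 ≤ k → k ≤ d → 0 ≤ v k)
    (lam : ℕ → ℤ)
    (hlamtop : lam (d - 2) = min 0 (m (d - 1) (d - 1)))
    (hlam : ∀ i, 1 ≤ i → i ≤ d - 3 →
      lam i = min 0 (m (d - 1) (i + 1) + ∑ k ∈ Finset.Icc (i + 1) (d - 2), lam k * m k (i + 1))) :
    0 ≤ m (d - 1) 1 + ∑ i ∈ Finset.Icc 1 (d - 2), lam i * m i 1 := by
  have hlam' : ∀ i ∈ Icc 1 (d - 2),
      lam i = min 0 (m (d - 1) (i + 1) + ∑ k ∈ Icc (i + 1) (d - 2), lam k * m k (i + 1)) := by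
    intro i hi
    rw [mem_Icc] at hi
    rcases hi.2.lt_or_eq with hlt | rfl
    · exact hlam i hi.1 (by omega)
    · rw [Icc_eq_empty (by omega), sum_empty, add_zero, hlamtop, show d - 2 + 1 = d - 1 by omega]
  let ε : ℕ → ℤ := fun i => if i = d - 1 ∨ lam i < 0 then 1 else 0
  have hε01 : ∀ i, ε i = 0 ∨ ε i = 1 := fun i => by unfold ε; split_ifs <;> simp
  have hεlam : ∀ i ∈ Icc 1 (d - 2), ε i = if lam i < 0 then 1 else 0 := fun i hi => by
    simp only [mem_Icc] at hi
    simp only [ε, show i ≠ d - 1 by omega, false_or]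
  have hvd := hadm ε hε01 _ (fun k => nakajimaCoord_eq ε m) d (by omega) le_rfl
  rwa [nakajimaCoord_eq ε m (by omega), show ε (d - 1) = 1 by simp [ε], one_mul,
    sum_mul_nakajimaCoord_eq d _ m lam ε hlam' hεlam] at hvd

theorem stmt3 (d : ℕ) (hd : 3 ≤ d) (m : ℕ → ℕ → ℤ)
    (hm : ∀ i j, i < j → m i j = 0)
    -- admissibility: all recursively defined coordinates `v k (ε)` are non-negative
    (hadm : ∀ ε : ℕ → ℤ, (∀ i, ε i = 0 ∨ ε i = 1) →
      ∀ v : ℕ → ℤ,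
        (∀ k, 2 ≤ k →
          v k = ε (k - 1) * (m (k - 1) 1 + ∑ l ∈ Finset.Ico 2 k, m (k - 1) l * v l)) →
      ∀ k, 2 ≤ k → k ≤ d → 0 ≤ v k)
    (lam : ℕ → ℤ)
    (hlamtop : lam (d - 2) = min 0 (m (d - 1) (d - 1)))
    (hlam : ∀ i, 1 ≤ i → i ≤ d - 3 →
      lam i = min 0 (m (d - 1) (i + 1) + ∑ k ∈ Finset.Icc (i + 1) (d - 2), lam k * m k (i + 1))) :
    0 ≤ m (d - 1) 1 + ∑ i ∈ Finset.Icc 1 (d - 2), lam i * m i 1 :=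
  stmt3_general d hd m hadm lam hlamtop hlam
end

section
/- Let d ≥ 2 and m an admissible Nakajima parameter matrix of length d-1. Set S_m^{(d)} := { v(ε) : ε ∈ {0,1}^{d-1} }, where v(ε) = (1, v_2(ε), …, v_d(ε))^⊤ with v_k(ε) := ε_{k-1}(m_{k-1,1} + Σ_{l=2}^{k-1} m_{k-1,l} v_l(ε)). Then the Nakajima polytope P_m^{(d)} equals the convex hull of S_m^{(d)}, and every element of S_m^{(d)} has all coordinates non-negative. -/
/-- Replace the `k`-th coordinate of `x` by `0`. -/
def coordZero {d : ℕ} (x : Fin d → ℝ) (k : ℕ) : Fin d → ℝ :=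
  fun j => if (j : ℕ) = k then 0 else x j

/-- The `k`-th (0-based) coordinate of `x`, or `0` if out of range. -/
def coordN {d : ℕ} (x : Fin d → ℝ) (k : ℕ) : ℝ :=
  if h : k < d then x ⟨k, h⟩ else 0

/-- The pairing `⟨m_i, x⟩ = ∑_{l=1}^{i} m_{i,l} x_l` of the row `m_i` with the
first `i` coordinates of `x`. -/
def nakPairing {d : ℕ} (m : ℕ → ℕ → ℤ) (i : ℕ) (x : Fin d → ℝ) : ℝ :=
  ∑ j ∈ Finset.univ.filter (fun j : Fin d => (j : ℕ) < i), (m i ((j : ℕ) + 1) : ℝ) * x j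

/-- The inductively defined Nakajima polytopes `P_m^{(i)} ⊂ ℝ^d`:
`P_m^{(1)} = {e₁}` and
`P_m^{(i)} = { (x', x_i, 0,…,0) : (x',0,…,0) ∈ P_m^{(i-1)}, 0 ≤ x_i ≤ ⟨m_{i-1}, x'⟩ }`. -/
def nakP (d : ℕ) (m : ℕ → ℕ → ℤ) : ℕ → Set (Fin d → ℝ)
  | 0 => ∅
  | 1 => {fun j : Fin d => if (j : ℕ) = 0 then (1 : ℝ) else 0}
  | i + 2 =>
      { x | coordZero x (i + 1) ∈ nakP d m (i + 1) ∧
        0 ≤ coordN x (i + 1) ∧ coordN x (i + 1) ≤ nakPairing m (i + 1) x }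

/-- Admissibility of the parameter matrix `m`:
`⟨m_{i-1}, x⟩ ≥ 0` for all `x ∈ P_m^{(i-1)}`, `2 ≤ i ≤ d`. -/
def NakAdmissibleR (d : ℕ) (m : ℕ → ℕ → ℤ) : Prop :=
  ∀ i, 2 ≤ i → i ≤ d → ∀ x ∈ nakP d m (i - 1), 0 ≤ nakPairing m (i - 1) x

/-- The recursively defined candidate-vertex coordinates:
`v₁(ε) = 1` and `v_k(ε) = ε_{k-1}(m_{k-1,1} + ∑_{l=2}^{k-1} m_{k-1,l} v_l(ε))`. -/
def nakV (m : ℕ → ℕ → ℤ) (ε : ℕ → ℤ) : ℕ → ℤ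
  | 0 => 0
  | 1 => 1
  | k + 2 =>
      ε (k + 1) * (m (k + 1) 1 +
        ∑ l : Fin (k + 2), if 2 ≤ (l : ℕ) then m (k + 1) (l : ℕ) * nakV m ε (l : ℕ) else 0)
termination_by n => n
decreasing_by exact l.isLt

/-!
`P^{(i+1)}` is the region between the graphs of `0` and of the linear form `⟨m_i, ·⟩` over
`P^{(i)}`, a form that is nonnegative there by admissibility. Over a base `conv S` such a region
is `conv (S ∪ L S)` with `L y = y + ⟨m_i, y⟩ e_{i+1}`, because `y + t e_{i+1}` lies on the segment
from `y` to `L y`. Switching on `ε_i` sends `v(ε)` to `L v(ε)`, so `S^{(i+1)} = S^{(i)} ∪ L S^{(i)}`,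
and induction on `i` gives `P^{(d)} = conv S^{(d)}`. The vertices are nonnegative because the whole
polytope lies in the nonnegative orthant.
-/

open Set

theorem convexHull_union_image_add_smul {E : Type*} [AddCommGroup E] [Module ℝ E]
    (f : E →ₗ[ℝ] ℝ) (e : E) {s : Set E} (hf : ∀ y ∈ convexHull ℝ s, 0 ≤ f y) :
    convexHull ℝ (s ∪ (fun y => y + f y • e) '' s) =
      {x | ∃ y ∈ convexHull ℝ s, ∃ t ∈ Icc 0 (f y), x = y + t • e} := by
  apply Subset.antisymm
  · refine convexHull_min ?_ ?_
    · rintro x (hx | ⟨y, hy, rfl⟩)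
      · exact ⟨x, subset_convexHull ℝ s hx, 0, ⟨le_rfl, hf x (subset_convexHull ℝ s hx)⟩,
          by rw [zero_smul, add_zero]⟩
      · exact ⟨y, subset_convexHull ℝ s hy, f y, ⟨hf y (subset_convexHull ℝ s hy), le_rfl⟩, rfl⟩
    · rintro _ ⟨y₁, hy₁, t₁, ht₁, rfl⟩ _ ⟨y₂, hy₂, t₂, ht₂, rfl⟩ a b ha hb hab
      refine ⟨a • y₁ + b • y₂, convex_convexHull ℝ s hy₁ hy₂ ha hb hab, a * t₁ + b * t₂,
        ⟨by nlinarith [ht₁.1, ht₂.1], ?_⟩, by module⟩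
      rw [map_add, map_smul, map_smul, smul_eq_mul, smul_eq_mul]
      exact add_le_add (mul_le_mul_of_nonneg_left ht₁.2 ha) (mul_le_mul_of_nonneg_left ht₂.2 hb)
  · rintro _ ⟨y, hy, t, ⟨ht₀, ht⟩, rfl⟩
    let L : E →ₗ[ℝ] E := LinearMap.id + f.smulRight e
    have hLy : L y ∈ convexHull ℝ (s ∪ L '' s) := by
      refine convexHull_mono subset_union_right ?_
      rw [← L.image_convexHull]
      exact mem_image_of_mem L hy
    have hy' : y ∈ convexHull ℝ (s ∪ L '' s) := convexHull_mono subset_union_left hy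
    have hline : y + t • e = AffineMap.lineMap y (L y) (t / f y) := by
      rw [AffineMap.lineMap_apply_module']
      rcases (hf y hy).eq_or_lt with hfy | hfy
      · simp [L, ← hfy, le_antisymm (hfy ▸ ht) ht₀]
      · simp [L, smul_smul, div_mul_cancel₀ t hfy.ne', add_comm]
    rw [hline]
    exact (convex_convexHull ℝ _).segment_subset hy' hLy
      (lineMap_mem_segment ℝ _ _ ⟨div_nonneg ht₀ (hf y hy), div_le_one_of_le₀ ht (hf y hy)⟩)

section Nakajima

variable {d : ℕ} {m : ℕ → ℕ → ℤ}

def unitVec (d k : ℕ) : Fin d → ℝ :=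
  fun j => if (j : ℕ) = k then 1 else 0

variable (m) in
def nakPairingLinear (i : ℕ) : (Fin d → ℝ) →ₗ[ℝ] ℝ where
  toFun := nakPairing m i
  map_add' x y := by simp only [nakPairing, Pi.add_apply, mul_add, Finset.sum_add_distrib]
  map_smul' a x := by
    simp only [nakPairing, Pi.smul_apply, smul_eq_mul, RingHom.id_apply, Finset.mul_sum]
    exact Finset.sum_congr rfl fun _ _ => by ring

@[simp]
theorem nakPairingLinear_apply (i : ℕ) (x : Fin d → ℝ) : nakPairingLinear m i x = nakPairing m i x :=
  rfl

theorem nakPairing_congr {i : ℕ} {x y : Fin d → ℝ} (h : ∀ j : Fin d, (j : ℕ) < i → x j = y j) :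
    nakPairing m i x = nakPairing m i y :=
  Finset.sum_congr rfl fun j hj => by rw [h j (Finset.mem_filter.1 hj).2]

theorem nakPairing_unitVec (i : ℕ) : nakPairing m i (unitVec d i) = 0 :=
  Finset.sum_eq_zero fun j hj => by
    simp [unitVec, ((Finset.mem_filter.1 hj).2).ne]

theorem nakP_apply_eq_zero : ∀ {i : ℕ} {x : Fin d → ℝ}, x ∈ nakP d m i →
    ∀ j : Fin d, i ≤ j → x j = 0
  | 0, _, hx, _, _ => hx.elim
  | 1, _, rfl, j, hj => if_neg (by omega)
  | i + 2, x, hx, j, hj => by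
    simpa [coordZero, show (j : ℕ) ≠ i + 1 by omega] using nakP_apply_eq_zero hx.1 j (by omega)

theorem nakP_nonneg : ∀ {i : ℕ} {x : Fin d → ℝ}, x ∈ nakP d m i → ∀ j, 0 ≤ x j
  | 0, _, hx, _ => hx.elim
  | 1, _, rfl, j => by dsimp only; split_ifs <;> norm_num
  | i + 2, x, hx, j => by
    by_cases hj : (j : ℕ) = i + 1
    · simpa [coordN, ← hj] using hx.2.1
    · simpa [coordZero, hj] using nakP_nonneg hx.1 j

theorem mem_nakP_add_two {i : ℕ} (hi : i + 2 ≤ d) {x : Fin d → ℝ} :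
    x ∈ nakP d m (i + 2) ↔ ∃ y ∈ nakP d m (i + 1), ∃ t ∈ Icc 0 (nakPairing m (i + 1) y),
      x = y + t • unitVec d (i + 1) := by
  have hlt : i + 1 < d := by omega
  have hcoord : coordN x (i + 1) = x ⟨i + 1, hlt⟩ := dif_pos hlt
  constructor
  · rintro ⟨hy, ht₀, ht⟩
    have hpair : nakPairing m (i + 1) (coordZero x (i + 1)) = nakPairing m (i + 1) x :=
      nakPairing_congr fun j hj => if_neg hj.ne
    refine ⟨_, hy, _, ⟨ht₀, hpair ▸ ht⟩, funext fun j => ?_⟩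
    by_cases hj : (j : ℕ) = i + 1
    · obtain rfl : j = ⟨i + 1, hlt⟩ := Fin.ext hj
      simp [coordZero, unitVec, hcoord]
    · simp [coordZero, unitVec, hj]
  · rintro ⟨y, hy, t, ⟨ht₀, ht⟩, rfl⟩
    have hy0 := nakP_apply_eq_zero hy ⟨i + 1, hlt⟩ le_rfl
    have hzero : coordZero (y + t • unitVec d (i + 1)) (i + 1) = y := funext fun j => by
      by_cases hj : (j : ℕ) = i + 1
      · obtain rfl : j = ⟨i + 1, hlt⟩ := Fin.ext hj
        simp [coordZero, hy0]
      · simp [coordZero, unitVec, hj]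
    have hlast : coordN (y + t • unitVec d (i + 1)) (i + 1) = t := by
      simp [coordN, hlt, unitVec, hy0]
    have hpair : nakPairing m (i + 1) (y + t • unitVec d (i + 1)) = nakPairing m (i + 1) y := by
      change nakPairingLinear m (i + 1) _ = nakPairingLinear m (i + 1) y
      rw [map_add, map_smul]
      simp only [nakPairingLinear_apply, nakPairing_unitVec, smul_zero, add_zero]
    refine ⟨?_, ?_, ?_⟩
    · rwa [hzero]
    · rwa [hlast]
    · rwa [hlast, hpair]

variable (m) in
def nakVec (d : ℕ) (ε : ℕ → ℤ) : Fin d → ℝ :=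
  fun j : Fin d => ((nakV m ε ((j : ℕ) + 1) : ℤ) : ℝ)

theorem nakV_congr {ε ε' : ℕ → ℤ} :
    ∀ {k : ℕ}, (∀ j < k, ε j = ε' j) → nakV m ε k = nakV m ε' k
  | 0, _ => by rw [nakV, nakV]
  | 1, _ => by rw [nakV, nakV]
  | k + 2, h => by
    rw [nakV, nakV, h (k + 1) (by omega)]
    congr 2
    exact Finset.sum_congr rfl fun l _ => by
      rw [nakV_congr fun j hj => h j (by omega)]
termination_by k => k
decreasing_by exact l.isLt

theorem nakV_add_two (ε : ℕ → ℤ) (n : ℕ) :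
    nakV m ε (n + 2) =
      ε (n + 1) * ∑ j ∈ Finset.range (n + 1), m (n + 1) (j + 1) * nakV m ε (j + 1) := by
  rw [nakV]
  congr 1
  rw [Fin.sum_univ_eq_sum_range (fun l => if 2 ≤ l then m (n + 1) l * nakV m ε l else 0),
    Finset.sum_range_succ', Finset.sum_range_succ', Finset.sum_range_succ']
  simp only [le_add_iff_nonneg_left, zero_le, ↓reduceIte, nakV, zero_add, Nat.not_ofNat_le_one,
    add_zero, nonpos_iff_eq_zero, OfNat.ofNat_ne_zero, mul_one]
  ring

theorem nakPairing_eq_sum_range {i : ℕ} (hi : i ≤ d) (x : Fin d → ℝ) :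
    nakPairing m i x = ∑ j ∈ Finset.range i, (m i (j + 1) : ℝ) * coordN x j := by
  calc nakPairing m i x
      = ∑ j : Fin d, if (j : ℕ) < i then (m i ((j : ℕ) + 1) : ℝ) * coordN x j else 0 := by
        rw [nakPairing, Finset.sum_filter]
        exact Finset.sum_congr rfl fun j _ => by simp only [coordN, j.isLt, dif_pos]
    _ = ∑ j ∈ Finset.range d, if j < i then (m i (j + 1) : ℝ) * coordN x j else 0 :=
        Fin.sum_univ_eq_sum_range (fun j => if j < i then (m i (j + 1) : ℝ) * coordN x j else 0) d
    _ = ∑ j ∈ Finset.range i, (m i (j + 1) : ℝ) * coordN x j := by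
        rw [← Finset.sum_subset (Finset.range_subset_range.2 hi)
          fun k _ hk => if_neg (by simpa using hk)]
        exact Finset.sum_congr rfl fun j hj => if_pos (Finset.mem_range.1 hj)

theorem nakV_add_two_eq_mul_nakPairing (ε : ℕ → ℤ) {n : ℕ} (hn : n + 1 ≤ d) :
    (nakV m ε (n + 2) : ℝ) = ε (n + 1) * nakPairing m (n + 1) (nakVec m d ε) := by
  rw [nakV_add_two, nakPairing_eq_sum_range hn]
  push_cast
  congr 1
  exact Finset.sum_congr rfl fun j hj => by
    simp [coordN, nakVec, (Finset.mem_range.1 hj).trans_le hn]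

variable (m) in
/-- `S_m^{(i)}`, realised inside `ℝ^d` by letting `ε` vanish from index `i` on. -/
def nakVertices (d i : ℕ) : Set (Fin d → ℝ) :=
  {x | ∃ ε : ℕ → ℤ, (∀ j, ε j = 0 ∨ ε j = 1) ∧ (∀ j, i ≤ j → ε j = 0) ∧ x = nakVec m d ε}

theorem nakVertices_one : nakVertices m d 1 = {unitVec d 0} := by
  apply Subset.antisymm
  · rintro _ ⟨ε, -, hε, rfl⟩
    refine funext fun ⟨j, hj⟩ => ?_
    rcases j with _ | n
    · simp [nakVec, unitVec, nakV]
    · simp [nakVec, unitVec, nakV_add_two, hε (n + 1) (by omega)]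
  · rintro _ rfl
    refine ⟨0, fun _ => Or.inl rfl, fun _ _ => rfl, funext fun ⟨j, hj⟩ => ?_⟩
    rcases j with _ | n
    · simp [nakVec, unitVec, nakV]
    · simp [nakVec, unitVec, nakV_add_two]

theorem nakVec_update_one {ε : ℕ → ℤ} {n : ℕ} (hn : n + 2 ≤ d) (hε : ∀ j, n + 1 ≤ j → ε j = 0) :
    nakVec m d (Function.update ε (n + 1) 1) =
      nakVec m d ε + nakPairing m (n + 1) (nakVec m d ε) • unitVec d (n + 1) := by
  set ε' := Function.update ε (n + 1) 1
  have hagree : ∀ j : Fin d, (j : ℕ) < n + 1 → nakVec m d ε' j = nakVec m d ε j := fun j hj => by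
    unfold nakVec
    rw [nakV_congr (k := (j : ℕ) + 1) fun l hl =>
      Function.update_of_ne (show l ≠ n + 1 by omega) 1 ε]
  funext ⟨j, hj⟩
  rcases lt_trichotomy j (n + 1) with hlt | rfl | hgt
  · simp [hagree ⟨j, hj⟩ hlt, unitVec, hlt.ne]
  · simp only [nakVec, Pi.add_apply, Pi.smul_apply, unitVec, if_pos, smul_eq_mul, mul_one]
    rw [nakV_add_two_eq_mul_nakPairing (d := d) (n := n) _ (by omega),
      nakV_add_two_eq_mul_nakPairing (d := d) (n := n) _ (by omega),
      nakPairing_congr hagree]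
    simp [ε', hε (n + 1) le_rfl]
  · obtain ⟨k, rfl⟩ : ∃ k, j = k + 1 := ⟨j - 1, by omega⟩
    simp [nakVec, unitVec, nakV_add_two, ε', hε (k + 1) (by omega), show k ≠ n by omega]

theorem nakVertices_add_two {n : ℕ} (hn : n + 2 ≤ d) :
    nakVertices m d (n + 2) = nakVertices m d (n + 1) ∪
      (fun y => y + nakPairing m (n + 1) y • unitVec d (n + 1)) '' nakVertices m d (n + 1) := by
  have hbin : ∀ {ε : ℕ → ℤ}, (∀ j, ε j = 0 ∨ ε j = 1) → ∀ c, (c = 0 ∨ c = 1) →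
      ∀ j, Function.update ε (n + 1) c j = 0 ∨ Function.update ε (n + 1) c j = 1 :=
    fun hε c hc j => by
      rw [Function.update_apply]
      split_ifs
      exacts [hc, hε j]
  apply Subset.antisymm
  · rintro _ ⟨ε, hε, hsupp, rfl⟩
    rcases hε (n + 1) with h | h
    · refine Or.inl ⟨ε, hε, fun j hj => ?_, rfl⟩
      rcases hj.eq_or_lt with rfl | hj
      exacts [h, hsupp j hj]
    · have hsupp' : ∀ j, n + 1 ≤ j → Function.update ε (n + 1) 0 j = 0 := fun j hj => by
        rw [Function.update_apply]
        split_ifs with hjn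
        exacts [rfl, hsupp j (by omega)]
      refine Or.inr ⟨_, ⟨_, hbin hε 0 (Or.inl rfl), hsupp', rfl⟩, ?_⟩
      dsimp only
      rw [← nakVec_update_one hn hsupp', Function.update_idem, Function.update_eq_self_iff.2 h.symm]
  · rintro _ (⟨ε, hε, hsupp, rfl⟩ | ⟨_, ⟨ε, hε, hsupp, rfl⟩, rfl⟩)
    · exact ⟨ε, hε, fun j hj => hsupp j (by omega), rfl⟩
    · refine ⟨_, hbin hε 1 (Or.inr rfl), fun j hj => ?_, (nakVec_update_one hn hsupp).symm⟩
      rw [Function.update_of_ne (by omega)]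
      exact hsupp j (by omega)

theorem nakVertices_self :
    nakVertices m d d = {x | ∃ ε : ℕ → ℤ, (∀ j, ε j = 0 ∨ ε j = 1) ∧ x = nakVec m d ε} := by
  apply Subset.antisymm
  · rintro _ ⟨ε, hε, -, rfl⟩
    exact ⟨ε, hε, rfl⟩
  · rintro _ ⟨ε, hε, rfl⟩
    refine ⟨fun j => if j < d then ε j else 0, fun j => ?_, fun j hj => if_neg (by omega), ?_⟩
    · dsimp only
      split_ifs
      exacts [hε j, Or.inl rfl]
    · exact funext fun j => by
        simp only [nakVec, nakV_congr fun l (hl : l < (j : ℕ) + 1) =>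
          (if_pos (show l < d by omega) : (if l < d then ε l else 0) = ε l)]

theorem nakP_eq_convexHull_nakVertices (hadm : NakAdmissibleR d m) {i : ℕ} (hi : 1 ≤ i)
    (hid : i ≤ d) : nakP d m i = convexHull ℝ (nakVertices m d i) := by
  induction i, hi using Nat.le_induction with
  | base => rw [nakVertices_one, convexHull_singleton]; rfl
  | succ i hi ih =>
    obtain ⟨n, rfl⟩ : ∃ n, i = n + 1 := ⟨i - 1, by omega⟩
    have hP := ih (by omega)
    have hpos : ∀ y ∈ convexHull ℝ (nakVertices m d (n + 1)), 0 ≤ nakPairingLinear m (n + 1) y :=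
      fun y hy => hadm (n + 2) (by omega) hid y (hP ▸ hy)
    have hhull := convexHull_union_image_add_smul _ (unitVec d (n + 1)) hpos
    simp only [nakPairingLinear_apply] at hhull
    ext x
    rw [nakVertices_add_two hid, hhull, mem_nakP_add_two hid, ← hP]
    rfl

end Nakajima

theorem stmt13_general (d : ℕ) (hd : 2 ≤ d) (m : ℕ → ℕ → ℤ)
    (hadm : NakAdmissibleR d m) :
    -- `P_m^{(d)}` is the convex hull of `S_m^{(d)} = {v(ε) : ε ∈ {0,1}^{d-1}}` …
    nakP d m d = convexHull ℝ
      { x : Fin d → ℝ | ∃ ε : ℕ → ℤ, (∀ i, ε i = 0 ∨ ε i = 1) ∧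
          x = fun j : Fin d => ((nakV m ε ((j : ℕ) + 1) : ℤ) : ℝ) } ∧
    -- … and every element of `S_m^{(d)}` has all coordinates non-negative
    (∀ ε : ℕ → ℤ, (∀ i, ε i = 0 ∨ ε i = 1) →
      ∀ k, 1 ≤ k → k ≤ d → 0 ≤ nakV m ε k) := by
  have hP : nakP d m d = convexHull ℝ (nakVertices m d d) :=
    nakP_eq_convexHull_nakVertices hadm (by omega) le_rfl
  rw [nakVertices_self] at hP
  refine ⟨hP, fun ε hε k hk hkd => ?_⟩
  have hmem : nakVec m d ε ∈ nakP d m d := hP ▸ subset_convexHull ℝ _ ⟨ε, hε, rfl⟩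
  obtain ⟨j, rfl⟩ : ∃ j, k = j + 1 := ⟨k - 1, by omega⟩
  exact Int.cast_nonneg_iff.mp (nakP_nonneg hmem ⟨j, by omega⟩)

theorem stmt13 (d : ℕ) (hd : 2 ≤ d) (m : ℕ → ℕ → ℤ)
    -- lower-triangularity: `m i j = 0` for `j > i` (1-based indices)
    (hm : ∀ i j, i < j → m i j = 0)
    (hadm : NakAdmissibleR d m) :
    -- `P_m^{(d)}` is the convex hull of `S_m^{(d)} = {v(ε) : ε ∈ {0,1}^{d-1}}` …
    nakP d m d = convexHull ℝ
      { x : Fin d → ℝ | ∃ ε : ℕ → ℤ, (∀ i, ε i = 0 ∨ ε i = 1) ∧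
          x = fun j : Fin d => ((nakV m ε ((j : ℕ) + 1) : ℤ) : ℝ) } ∧
    -- … and every element of `S_m^{(d)}` has all coordinates non-negative
    (∀ ε : ℕ → ℤ, (∀ i, ε i = 0 ∨ ε i = 1) →
      ∀ k, 1 ≤ k → k ≤ d → 0 ≤ nakV m ε k) :=
  stmt13_general d hd m hadm
end

section
/- For k ∈ ℤ with k ≥ 2 and d ≥ 4, let s_k^{(d)} := conv({e_1, e_1 + k·e_2, e_1 + k(e_2+e_3), …, e_1 + k(e_2+⋯+e_d)}) ⊂ ℝ^d. Then s_k^{(d)} equals the Nakajima polytope P_m^{(d)} where m is the (d-1) × d matrix with m_{1,1} = k, m_{i,i} = 1 for 2 ≤ i ≤ d-1, and all other entries zero; moreover this m is admissible. -/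
/-! For this `m` the bound `⟨m_i, x⟩` on `x_{i+1}` is `k x_1 = k` for `i = 1` and `x_i` for
`i ≥ 2`, so `P_m^{(d)}` is the staircase `{x_1 = 1, k ≥ x_2 ≥ ⋯ ≥ x_d ≥ 0}`; its nonnegativity is
admissibility. The staircase is convex and contains the vertices `e_1 + k(e_2 + ⋯ + e_{t+1})`;
conversely, writing `u = (k, x_2, …, x_d, 0)`, the weights `(u_t - u_{t+1}) / k` are nonnegative,
sum to `1` and reproduce `x` by telescoping. -/

open Finset

lemma coordN_val {d : ℕ} (x : Fin d → ℝ) (j : Fin d) : coordN x j = x j := by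
  simp [coordN]

lemma coordN_of_le {d : ℕ} (x : Fin d → ℝ) {j : ℕ} (h : d ≤ j) : coordN x j = 0 :=
  dif_neg (by omega)

lemma coordN_coordZero {d : ℕ} (x : Fin d → ℝ) (a j : ℕ) :
    coordN (coordZero x a) j = if j = a then 0 else coordN x j := by
  unfold coordN coordZero
  split_ifs <;> simp_all

lemma coordN_add_smul {d : ℕ} (a b : ℝ) (x y : Fin d → ℝ) (j : ℕ) :
    coordN (a • x + b • y) j = a * coordN x j + b * coordN y j := by
  unfold coordN
  split_ifs <;> simp

lemma nakPairing_coordZero {d : ℕ} (m : ℕ → ℕ → ℤ) (x : Fin d → ℝ) {a j : ℕ} (h : j ≤ a) :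
    nakPairing m j (coordZero x a) = nakPairing m j x := by
  refine sum_congr rfl fun l hl => ?_
  have : (l : ℕ) ≠ a := by simp at hl; omega
  simp [coordZero, this]

theorem mem_nakP_iff {d : ℕ} (hd : 0 < d) (m : ℕ → ℕ → ℤ) {n : ℕ} (hn : 1 ≤ n)
    (x : Fin d → ℝ) :
    x ∈ nakP d m n ↔ coordN x 0 = 1 ∧ (∀ j, n ≤ j → coordN x j = 0) ∧
      ∀ j, 1 ≤ j → j < n → 0 ≤ coordN x j ∧ coordN x j ≤ nakPairing m j x := by
  induction n, hn using Nat.le_induction generalizing x with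
  | base =>
    refine ⟨?_, fun ⟨h0, hpos, _⟩ => funext fun j => ?_⟩
    · rintro rfl
      refine ⟨by simp [coordN, hd], fun j hj => ?_, by omega⟩
      simp [coordN, show j ≠ 0 by omega]
    · rw [← coordN_val x j]
      split_ifs with hj
      · rwa [hj]
      · exact hpos _ (by omega)
  | succ n hn ih =>
    obtain ⟨n, rfl⟩ : ∃ i, n = i + 1 := ⟨n - 1, by omega⟩
    change coordZero x (n + 1) ∈ nakP d m (n + 1) ∧ _ ↔ _
    simp only [ih, coordN_coordZero]
    constructor
    · rintro ⟨⟨h0, hzero, hbound⟩, hpos, hle⟩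
      refine ⟨by simpa using h0, fun j hj => ?_, fun j hj1 hj2 => ?_⟩
      · simpa [show j ≠ n + 1 by omega] using hzero j (by omega)
      · rcases (show j < n + 1 ∨ j = n + 1 by omega) with hj | rfl
        · simpa [show j ≠ n + 1 by omega, nakPairing_coordZero m x hj.le] using hbound j hj1 hj
        · exact ⟨hpos, hle⟩
    · rintro ⟨h0, hzero, hbound⟩
      refine ⟨⟨by simpa using h0, fun j hj => ?_, fun j hj1 hj2 => ?_⟩,
        hbound _ (by omega) (by omega)⟩
      · split_ifs with h
        · rfl
        · exact hzero j (by omega)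
      · simpa [show j ≠ n + 1 by omega, nakPairing_coordZero m x hj2.le] using
          hbound j hj1 (by omega)

lemma nakPairing_of_row_eq_single {d : ℕ} (m : ℕ → ℕ → ℤ) {i c : ℕ} {a : ℤ}
    (hrow : ∀ l, m i l = if l = c then a else 0) (hc : 1 ≤ c) (hci : c ≤ i) (x : Fin d → ℝ) :
    nakPairing m i x = a * coordN x (c - 1) := by
  unfold nakPairing
  simp only [hrow, Int.cast_ite, Int.cast_zero, ite_mul, zero_mul]
  by_cases hcd : c - 1 < d
  · rw [sum_eq_single_of_mem (⟨c - 1, hcd⟩ : Fin d) (by simp; omega) fun l _ hl => ?_]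
    · simp [coordN, hcd, show c - 1 + 1 = c by omega]
    · rw [if_neg fun h => hl (Fin.ext (by simp; omega))]
  · rw [coordN_of_le x (by omega), mul_zero]
    exact sum_eq_zero fun l _ => if_neg (by omega)

def chainMatrix (d : ℕ) (k : ℤ) : ℕ → ℕ → ℤ := fun i j =>
  if i = 1 ∧ j = 1 then k else if 2 ≤ i ∧ i ≤ d - 1 ∧ j = i then 1 else 0

/-- The sequence `k, x₁, x₂, …` (`0`-based): putting `k` in place of `x₀ = 1` makes every
staircase constraint read `x_j ≤ staircaseHeight k x (j - 1)`. -/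
def staircaseHeight {d : ℕ} (k : ℝ) (x : Fin d → ℝ) (j : ℕ) : ℝ :=
  if j = 0 then k else coordN x j

lemma nakPairing_chainMatrix {d : ℕ} (k : ℤ) {x : Fin d → ℝ} (hx : coordN x 0 = 1) {j : ℕ}
    (hj1 : 1 ≤ j) (hjd : j ≤ d - 1) :
    nakPairing (chainMatrix d k) j x = staircaseHeight k x (j - 1) := by
  rcases (show j = 1 ∨ 2 ≤ j by omega) with rfl | hj2
  · rw [nakPairing_of_row_eq_single _ (c := 1) (a := k) (fun l => by simp [chainMatrix]) le_rfl
      le_rfl]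
    simp [hx, staircaseHeight]
  · rw [nakPairing_of_row_eq_single _ (c := j) (a := 1) (fun l => ?_) hj1 le_rfl]
    · simp [staircaseHeight, show j - 1 ≠ 0 by omega]
    · simp [chainMatrix, show j ≠ 1 by omega, hj2, hjd]

def staircase (d : ℕ) (k : ℝ) : Set (Fin d → ℝ) :=
  {x | coordN x 0 = 1 ∧
    ∀ j, 1 ≤ j → j < d → 0 ≤ coordN x j ∧ coordN x j ≤ staircaseHeight k x (j - 1)}

lemma staircaseHeight_nonneg {d : ℕ} {k : ℝ} (hk : 0 ≤ k) {x : Fin d → ℝ} {j : ℕ}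
    (hx : 1 ≤ j → 0 ≤ coordN x j) : 0 ≤ staircaseHeight k x j := by
  unfold staircaseHeight
  split_ifs with h
  exacts [hk, hx (by omega)]

lemma mem_nakP_chainMatrix_iff {d : ℕ} (hd : 0 < d) (k : ℤ) {n : ℕ} (hn1 : 1 ≤ n) (hnd : n ≤ d)
    (x : Fin d → ℝ) :
    x ∈ nakP d (chainMatrix d k) n ↔ coordN x 0 = 1 ∧ (∀ j, n ≤ j → coordN x j = 0) ∧
      ∀ j, 1 ≤ j → j < n → 0 ≤ coordN x j ∧ coordN x j ≤ staircaseHeight k x (j - 1) := by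
  rw [mem_nakP_iff hd _ hn1]
  refine and_congr_right fun hx => and_congr_right fun _ => forall₂_congr fun j hj1 => ?_
  exact imp_congr_right fun hjn => by rw [nakPairing_chainMatrix k hx hj1 (by omega)]

theorem nakAdmissibleR_chainMatrix {d : ℕ} {k : ℤ} (hk : 0 ≤ k) :
    NakAdmissibleR d (chainMatrix d k) := by
  intro i hi2 hid x hx
  obtain ⟨hx0, -, hbound⟩ := (mem_nakP_chainMatrix_iff (by omega) k (by omega) (by omega) x).1 hx
  rw [nakPairing_chainMatrix k hx0 (by omega) (by omega)]
  exact staircaseHeight_nonneg (by exact_mod_cast hk) fun h => (hbound _ h (by omega)).1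

theorem nakP_chainMatrix_eq_staircase {d : ℕ} (hd : 0 < d) (k : ℤ) :
    nakP d (chainMatrix d k) d = staircase d k := by
  ext x
  rw [mem_nakP_chainMatrix_iff hd k hd le_rfl]
  exact and_congr_right fun _ => and_iff_right fun j hj => coordN_of_le x hj

def staircaseVertex (d : ℕ) (k : ℝ) (t : Fin d) : Fin d → ℝ :=
  fun j => if (j : ℕ) = 0 then 1 else if (j : ℕ) ≤ (t : ℕ) then k else 0

lemma staircaseHeight_vertex {d : ℕ} (k : ℝ) (t : Fin d) (j : ℕ) :
    staircaseHeight k (staircaseVertex d k t) j = if j ≤ t then k else 0 := by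
  unfold staircaseHeight coordN staircaseVertex
  split_ifs <;> first | rfl | omega

lemma staircaseHeight_add_smul {d : ℕ} (k : ℝ) (x y : Fin d → ℝ) {a b : ℝ} (hab : a + b = 1)
    (j : ℕ) :
    staircaseHeight k (a • x + b • y) j =
      a * staircaseHeight k x j + b * staircaseHeight k y j := by
  unfold staircaseHeight
  split_ifs
  · rw [← add_mul, hab, one_mul]
  · exact coordN_add_smul a b x y j

lemma staircaseHeight_succ_le {d : ℕ} {k : ℝ} (hk : 0 ≤ k) {x : Fin d → ℝ}
    (hx : x ∈ staircase d k) {t : ℕ} (ht : t < d) :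
    staircaseHeight k x (t + 1) ≤ staircaseHeight k x t := by
  have hxt : staircaseHeight k x (t + 1) = coordN x (t + 1) := if_neg (by omega)
  rcases (show t + 1 < d ∨ t + 1 = d by omega) with hlt | rfl
  · simpa [hxt] using (hx.2 (t + 1) (by omega) hlt).2
  · rw [hxt, coordN_of_le x le_rfl]
    exact staircaseHeight_nonneg hk fun h => (hx.2 t h ht).1

lemma convex_staircase (d : ℕ) (k : ℝ) : Convex ℝ (staircase d k) := by
  intro x hx y hy a b ha hb hab
  refine ⟨by rw [coordN_add_smul, hx.1, hy.1]; linarith, fun j hj1 hjd => ?_⟩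
  obtain ⟨hx0, hxj⟩ := hx.2 j hj1 hjd
  obtain ⟨hy0, hyj⟩ := hy.2 j hj1 hjd
  rw [coordN_add_smul, staircaseHeight_add_smul k x y hab]
  exact ⟨by positivity, by gcongr⟩

lemma staircaseVertex_mem {d : ℕ} {k : ℝ} (hk : 0 ≤ k) (t : Fin d) :
    staircaseVertex d k t ∈ staircase d k := by
  refine ⟨by simp [coordN, staircaseVertex, t.pos], fun j hj1 hjd => ?_⟩
  have hj : coordN (staircaseVertex d k t) j = staircaseHeight k (staircaseVertex d k t) j :=
    (if_neg (by omega)).symm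
  rw [hj, staircaseHeight_vertex, staircaseHeight_vertex]
  split_ifs <;> first | exact ⟨hk, le_rfl⟩ | exact ⟨le_rfl, hk⟩ | exact ⟨le_rfl, le_rfl⟩ | omega

lemma sum_range_ite_sub_succ (u : ℕ → ℝ) {j n : ℕ} (h : j ≤ n) :
    ∑ t ∈ range n, (if j ≤ t then u t - u (t + 1) else 0) = u j - u n := by
  induction n, h using Nat.le_induction with
  | base => simpa using sum_eq_zero fun t ht => if_neg (by simp at ht; omega)
  | succ n hjn ih => rw [sum_range_succ, ih, if_pos hjn]; ring

lemma staircase_subset_convexHull {d : ℕ} {k : ℝ} (hk : 0 < k) :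
    staircase d k ⊆ convexHull ℝ {x | ∃ t, x = staircaseVertex d k t} := by
  intro x hx
  obtain hd | hd := Nat.eq_zero_or_pos d
  · subst hd
    simp [staircase, coordN] at hx
  set u := staircaseHeight k x
  let w : Fin d → ℝ := fun t => (u t - u (t + 1)) / k
  have htelescope : ∀ j ≤ d, ∑ t : Fin d, (if j ≤ (t : ℕ) then u t - u (t + 1) else 0) = u j := by
    intro j hj
    rw [Fin.sum_univ_eq_sum_range (fun t => if j ≤ t then u t - u (t + 1) else 0),
      sum_range_ite_sub_succ u hj, show u d = 0 from (if_neg hd.ne').trans (coordN_of_le x le_rfl),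
      sub_zero]
  have hw1 : ∑ t, w t = 1 := by
    have := htelescope 0 hd.le
    simp only [zero_le, if_true] at this
    rw [← sum_div, this, show u 0 = k from if_pos rfl, div_self hk.ne']
  have hx_eq : ∑ t, w t • staircaseVertex d k t = x := by
    funext j
    simp only [Finset.sum_apply, Pi.smul_apply, smul_eq_mul, staircaseVertex]
    by_cases hj : (j : ℕ) = 0
    · simp only [hj, if_true, mul_one, hw1]
      rw [← coordN_val x j, hj, hx.1]
    · simp only [if_neg hj]
      calc ∑ t, w t * (if (j : ℕ) ≤ t then k else 0)
          = ∑ t : Fin d, (if (j : ℕ) ≤ t then u t - u (t + 1) else 0) :=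
            sum_congr rfl fun t _ => by split_ifs; exacts [div_mul_cancel₀ _ hk.ne', mul_zero _]
        _ = x j := (htelescope j j.isLt.le).trans ((if_neg hj).trans (coordN_val x j))
  rw [← hx_eq]
  exact (convex_convexHull ℝ _).sum_mem
    (fun t _ => div_nonneg (sub_nonneg.2 (staircaseHeight_succ_le hk.le hx t.isLt)) hk.le) hw1
    fun t _ => subset_convexHull ℝ _ ⟨t, rfl⟩

theorem staircase_eq_convexHull {d : ℕ} {k : ℝ} (hk : 0 < k) :
    staircase d k = convexHull ℝ {x | ∃ t, x = staircaseVertex d k t} :=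
  (staircase_subset_convexHull hk).antisymm <| convexHull_min
    (by rintro _ ⟨t, rfl⟩; exact staircaseVertex_mem hk.le t) (convex_staircase d k)

theorem stmt18 (d : ℕ) (hd : 4 ≤ d) (k : ℤ) (hk : 2 ≤ k)
    -- `m` has `m_{1,1} = k`, `m_{i,i} = 1` for `2 ≤ i ≤ d-1`, zeros elsewhere
    (m : ℕ → ℕ → ℤ)
    (hmdef : ∀ i j, m i j =
      if i = 1 ∧ j = 1 then k else if 2 ≤ i ∧ i ≤ d - 1 ∧ j = i then 1 else 0) :
    -- this `m` is admissible, and `s_k^{(d)} = conv({e₁, e₁ + k e₂, …,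
    -- e₁ + k(e₂ + ⋯ + e_d)})` equals the Nakajima polytope `P_m^{(d)}`
    NakAdmissibleR d m ∧
    nakP d m d = convexHull ℝ
      { x : Fin d → ℝ | ∃ t : Fin d,
          x = fun j : Fin d =>
            if (j : ℕ) = 0 then (1 : ℝ)
            else if (j : ℕ) ≤ (t : ℕ) then (k : ℝ) else 0 } := by
  obtain rfl : m = chainMatrix d k := funext fun i => funext (hmdef i)
  have hk_pos : (0 : ℝ) < k := by exact_mod_cast (show (0 : ℤ) < k by omega)
  refine ⟨nakAdmissibleR_chainMatrix (by omega), ?_⟩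
  rw [nakP_chainMatrix_eq_staircase (by omega)]
  exact staircase_eq_convexHull hk_pos
end
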